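/- If A is δ-G, meaning the intersection of all nonzero δ-prime ideals of A is nonzero, then A[z] with the Poisson bracket {−,−}_δ is Poisson primitive. -/

import Mathlib

open Polynomial

/-- A Poisson bracket on a commutative `ℂ`-algebra `B`. -/
structure IsPoissonBracket {B : Type*} [CommRing B] [Algebra ℂ B]
    (br : B → B → B) : Prop where
  add_left : ∀ a b c : B, br (a + b) c = br a c + br b c
  smul_left : ∀ (r : ℂ) (a b : B), br (r • a) b = r • br a b
  antisymm : ∀ a b : B, br a b = - br b a
  jacobi : ∀ a b c : B, br a (br b c) + br b (br c a) + br c (br a b) = 0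
  leibniz : ∀ a b c : B, br a (b * c) = br a b * c + b * br a c

/-- The Poisson bracket `{-,-}_δ` on `A[z]`: zero on `A` and `{z,a} = δ a`. -/
def IsDeltaBracket {A : Type*} [CommRing A] [Algebra ℂ A] (δ : Derivation ℂ A A)
    (br : Polynomial A → Polynomial A → Polynomial A) : Prop :=
  IsPoissonBracket br ∧ (∀ a b : A, br (Polynomial.C a) (Polynomial.C b) = 0) ∧
    (∀ a : A, br Polynomial.X (Polynomial.C a) = Polynomial.C (δ a))

/-- `I` is a Poisson ideal for the bracket `br`. -/
def IsPoissonIdeal {B : Type*} [CommRing B] (br : B → B → B) (I : Ideal B) : Prop :=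
  ∀ b : B, ∀ i ∈ I, br b i ∈ I

/-- `I` is a `δ`-ideal. -/
def IsDeltaIdeal {A : Type*} [CommRing A] [Algebra ℂ A] (δ : Derivation ℂ A A)
    (I : Ideal A) : Prop :=
  ∀ a ∈ I, δ a ∈ I

/-- `P` is a `δ`-prime ideal. -/
def IsDeltaPrime {A : Type*} [CommRing A] [Algebra ℂ A] (δ : Derivation ℂ A A)
    (P : Ideal A) : Prop :=
  P ≠ ⊤ ∧ IsDeltaIdeal δ P ∧
    ∀ I J : Ideal A, IsDeltaIdeal δ I → IsDeltaIdeal δ J → I * J ≤ P → I ≤ P ∨ J ≤ P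

/-!
Pick `c ≠ 0` in every nonzero `δ`-prime. A `δ`-ideal maximal among those avoiding the powers of
`c` is `δ`-prime, so every nonzero `δ`-ideal of `A` contains a power of `c`. A nonzero Poisson
ideal `I` of `A[z]` meets `A` in a nonzero `δ`-ideal: applying `{a, -} = -δ(a) ∂_z` to an element
of `I` of minimal degree lowers its degree unless it is a constant. Since the Jacobson radical of
`A[z]` vanishes, some maximal ideal `N` misses `c`, and then no nonzero Poisson ideal lies in `N`.
-/

namespace Polynomial

theorem jacobson_bot_eq_bot {R : Type*} [CommRing R] [NoZeroDivisors R] :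
    (⊥ : Ideal R[X]).jacobson = ⊥ := by
  refine eq_bot_iff.2 fun f hf => (Submodule.mem_bot _).2 <| Polynomial.ext fun n => ?_
  have hconst := natDegree_eq_zero_of_isUnit (Ideal.mem_jacobson_bot.1 hf X)
  have hcoeff : (f * X + 1).coeff (n + 1) = 0 := coeff_eq_zero_of_natDegree_lt (by omega)
  simpa [coeff_one] using hcoeff

theorem exists_isMaximal_C_notMem {R : Type*} [CommRing R] [NoZeroDivisors R] {c : R}
    (hc : c ≠ 0) : ∃ N : Ideal R[X], N.IsMaximal ∧ C c ∉ N := by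
  have hcJ : C c ∉ (⊥ : Ideal R[X]).jacobson := by
    rw [jacobson_bot_eq_bot, Submodule.mem_bot, C_eq_zero]
    exact hc
  simp only [Ideal.jacobson, Ideal.mem_sInf, not_forall] at hcJ
  obtain ⟨N, ⟨-, hN⟩, hcN⟩ := hcJ
  exact ⟨N, hN, hcN⟩

end Polynomial

section DeltaIdeal

variable {A : Type*} [CommRing A] [Algebra ℂ A] {δ : Derivation ℂ A A}

theorem IsDeltaIdeal.sup {I J : Ideal A} (hI : IsDeltaIdeal δ I) (hJ : IsDeltaIdeal δ J) :
    IsDeltaIdeal δ (I ⊔ J) := by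
  intro a ha
  obtain ⟨x, hx, y, hy, rfl⟩ := Submodule.mem_sup.1 ha
  rw [map_add]
  exact Submodule.add_mem_sup (hI x hx) (hJ y hy)

def deltaIdealsAvoidingPowers (δ : Derivation ℂ A A) (c : A) : Set (Ideal A) :=
  {Q | IsDeltaIdeal δ Q ∧ ∀ k : ℕ, c ^ k ∉ Q}

theorem exists_le_maximal_deltaIdealsAvoidingPowers {c : A} {J : Ideal A}
    (hJ : J ∈ deltaIdealsAvoidingPowers δ c) :
    ∃ Q, J ≤ Q ∧ Maximal (· ∈ deltaIdealsAvoidingPowers δ c) Q := by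
  refine zorn_le_nonempty₀ _ (fun S hS hchain Q₀ hQ₀ => ?_) J hJ
  have mem_sSup {a : A} : a ∈ sSup S ↔ ∃ Q ∈ S, a ∈ Q :=
    Submodule.mem_sSup_of_directed ⟨Q₀, hQ₀⟩ hchain.directedOn
  refine ⟨sSup S, ⟨fun a ha => ?_, fun k hk => ?_⟩, fun Q hQ => le_sSup hQ⟩
  · obtain ⟨Q, hQS, haQ⟩ := mem_sSup.1 ha
    exact le_sSup hQS ((hS hQS).1 a haQ)
  · obtain ⟨Q, hQS, hkQ⟩ := mem_sSup.1 hk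
    exact (hS hQS).2 k hkQ

theorem isDeltaPrime_of_maximal_deltaIdealsAvoidingPowers {c : A} {Q : Ideal A}
    (hQ : Maximal (· ∈ deltaIdealsAvoidingPowers δ c) Q) : IsDeltaPrime δ Q := by
  obtain ⟨hQδ, hQc⟩ := hQ.prop
  have exists_pow_mem_sup {I : Ideal A} (hI : IsDeltaIdeal δ I) (hIQ : ¬I ≤ Q) :
      ∃ k : ℕ, c ^ k ∈ Q ⊔ I := by
    by_contra! h
    exact hIQ (le_sup_right.trans (hQ.2 ⟨hQδ.sup hI, h⟩ le_sup_left))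
  refine ⟨fun htop => hQc 0 (htop ▸ Submodule.mem_top), hQδ, fun I J hI hJ hIJ => ?_⟩
  by_contra! h
  obtain ⟨m, hm⟩ := exists_pow_mem_sup hI h.1
  obtain ⟨n, hn⟩ := exists_pow_mem_sup hJ h.2
  have hprod : (Q ⊔ I) * (Q ⊔ J) ≤ Q := by
    rw [Ideal.sup_mul, Ideal.mul_sup, Ideal.mul_sup]
    exact sup_le (sup_le Ideal.mul_le_right Ideal.mul_le_left)
      (sup_le Ideal.mul_le_right hIJ)
  exact hQc (m + n) (pow_add c m n ▸ hprod (Ideal.mul_mem_mul hm hn))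

theorem exists_pow_mem_of_isDeltaIdeal {c : A}
    (hc : c ∈ sInf {P : Ideal A | IsDeltaPrime δ P ∧ P ≠ ⊥}) {J : Ideal A}
    (hJ : IsDeltaIdeal δ J) (hJ0 : J ≠ ⊥) : ∃ k : ℕ, c ^ k ∈ J := by
  by_contra! hJc
  obtain ⟨Q, hJQ, hQ⟩ := exists_le_maximal_deltaIdealsAvoidingPowers ⟨hJ, hJc⟩
  have hQ0 : Q ≠ ⊥ := fun h => hJ0 (le_bot_iff.1 (h ▸ hJQ))
  have hcQ : c ∈ Q :=
    Ideal.mem_sInf.1 hc ⟨isDeltaPrime_of_maximal_deltaIdealsAvoidingPowers hQ, hQ0⟩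
  exact hQ.prop.2 1 (by rwa [pow_one])

end DeltaIdeal

namespace IsPoissonBracket

variable {B : Type*} [CommRing B] [Algebra ℂ B] {br : B → B → B}

theorem zero_left (hbr : IsPoissonBracket br) (a : B) : br 0 a = 0 := by
  simpa using hbr.add_left 0 0 a

theorem add_right (hbr : IsPoissonBracket br) (a b c : B) :
    br a (b + c) = br a b + br a c := by
  rw [hbr.antisymm, hbr.add_left, hbr.antisymm b a, hbr.antisymm c a, neg_add, neg_neg, neg_neg]

end IsPoissonBracket

section DeltaBracket

variable {A : Type*} [CommRing A] [Algebra ℂ A] {δ : Derivation ℂ A A}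
  {br : A[X] → A[X] → A[X]}

theorem IsDeltaBracket.C_left (hbr : IsDeltaBracket δ br) (b : A) (p : A[X]) :
    br (C b) p = -(C (δ b) * derivative p) := by
  obtain ⟨hpb, hCC, hXC⟩ := hbr
  induction p using Polynomial.induction_on with
  | C a => simp [hCC]
  | add p q hp hq => rw [hpb.add_right, hp, hq, derivative_add]; ring
  | monomial n a ih =>
    rw [show C a * X ^ (n + 1) = C a * X ^ n * X by ring, hpb.leibniz, ih, hpb.antisymm, hXC,
      derivative_mul (f := C a * X ^ n), derivative_X]
    ring

theorem IsPoissonIdeal.isDeltaIdeal_comap_C (hbr : IsDeltaBracket δ br) {I : Ideal A[X]}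
    (hI : IsPoissonIdeal br I) : IsDeltaIdeal δ (I.comap C) := by
  intro a ha
  simpa only [Ideal.mem_comap, hbr.2.2] using hI X (C a) ha

theorem IsPoissonIdeal.comap_C_ne_bot [IsDomain A] (hbr : IsDeltaBracket δ br) (hδ : δ ≠ 0)
    {I : Ideal A[X]} (hI : IsPoissonIdeal br I) (hI0 : I ≠ ⊥) : I.comap C ≠ ⊥ := by
  have : CharZero A := charZero_of_injective_algebraMap (algebraMap ℂ A).injective
  obtain ⟨b, hb⟩ : ∃ b, δ b ≠ 0 := by
    by_contra! h
    exact hδ (Derivation.ext h)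
  suffices ∀ n, ∀ p ∈ I, p ≠ 0 → p.natDegree = n → I.comap C ≠ ⊥ by
    obtain ⟨p, hpI, hp0⟩ := Submodule.exists_mem_ne_zero_of_ne_bot hI0
    exact this _ p hpI hp0 rfl
  intro n
  induction n using Nat.strong_induction_on with
  | _ n ih =>
    intro p hpI hp0 hpn
    by_cases hdeg : p.natDegree = 0
    · rw [eq_C_of_natDegree_eq_zero hdeg] at hpI hp0
      exact (Submodule.ne_bot_iff _).2 ⟨_, hpI, by simpa using hp0⟩
    -- `{b, p} = -δ(b) p'` is a nonzero element of `I` of smaller degree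
    refine ih _ ?_ _ (hI (C b) p hpI) ?_ rfl
    · rw [hbr.C_left, natDegree_neg, natDegree_C_mul hb, ← hpn]
      exact natDegree_derivative_lt hdeg
    · rw [hbr.C_left, neg_ne_zero]
      exact mul_ne_zero (C_ne_zero.2 hb) (derivative_ne_zero.2 hdeg)

end DeltaBracket

theorem stmt_13 {A : Type*} [CommRing A] [Algebra ℂ A] [IsDomain A]
    (δ : Derivation ℂ A A) (hδ : δ ≠ 0)
    (br : Polynomial A → Polynomial A → Polynomial A) (hbr : IsDeltaBracket δ br)
    (hG : sInf {P : Ideal A | IsDeltaPrime δ P ∧ P ≠ ⊥} ≠ ⊥) :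
    ∃ N : Ideal (Polynomial A), N.IsMaximal ∧
      ∀ I : Ideal (Polynomial A), IsPoissonIdeal br I → I ≠ ⊥ → ¬ I ≤ N := by
  obtain ⟨c, hc, hc0⟩ := Submodule.exists_mem_ne_zero_of_ne_bot hG
  obtain ⟨N, hN, hcN⟩ := exists_isMaximal_C_notMem hc0
  refine ⟨N, hN, fun I hI hI0 hIN => hcN ?_⟩
  obtain ⟨k, hk⟩ := exists_pow_mem_of_isDeltaIdeal hc (hI.isDeltaIdeal_comap_C hbr)
    (hI.comap_C_ne_bot hbr hδ hI0)
  exact hN.isPrime.mem_of_pow_mem k (by simpa using hIN hk)
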